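/- arXiv:2502.09456 — 8 statements merged into one kernel-verified Lean document; each statement's English description precedes it below -/
import Mathlib

section
/- In any ∇-algebra (A, ∇, →), the operation → is an abstract implication: a → a = 1 for all a, and (a → b) ∧ (b → c) ≤ a → c for all a, b, c ∈ A. -/
theorem imp_is_abstract_implication {A : Type*} [Lattice A] [BoundedOrder A]
    (nabla : A → A) (imp : A → A → A)
    (adj : ∀ a b c : A, nabla c ⊓ a ≤ b ↔ c ≤ imp a b) :
    (∀ a : A, imp a a = ⊤) ∧ (∀ a b c : A, imp a b ⊓ imp b c ≤ imp a c) := by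
  constructor
  · intro a
    exact le_antisymm le_top ((adj a a ⊤).mp inf_le_right)
  · intro a b c
    apply (adj a c _).mp
    have h1 : nabla (imp a b ⊓ imp b c) ⊓ a ≤ b := (adj a b _).mpr inf_le_left
    have h2 : nabla (imp a b ⊓ imp b c) ⊓ b ≤ c := (adj b c _).mpr inf_le_right
    exact le_trans (le_inf inf_le_left h1) h2
end

section
/- In any Heyting ∇-algebra, defining □a := ⊤ → a, one has a → b = □(a ⊃ b), where ⊃ denotes the Heyting implication. -/
theorem imp_eq_box_himp {A : Type*} [HeytingAlgebra A]
    (nabla : A → A) (imp : A → A → A)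
    (adj : ∀ a b c : A, nabla c ⊓ a ≤ b ↔ c ≤ imp a b) :
    ∀ a b : A, imp a b = imp ⊤ (a ⇨ b) := by
  intro a b
  apply le_antisymm
  · rw [← adj]
    rw [inf_top_eq, le_himp_iff]
    exact (adj a b (imp a b)).2 le_rfl
  · rw [← adj]
    have h := (adj ⊤ (a ⇨ b) (imp ⊤ (a ⇨ b))).2 le_rfl
    rw [inf_top_eq] at h
    exact le_trans (inf_le_inf_right a h) (himp_inf_le)
end

section
/- The sequent A ⇒ A is provable in the sequent calculus iK_d for every formula A; that is, the general identity axiom is admissible from the atomic identity axiom. -/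
inductive Formula where
  | atom : ℕ → Formula
  | top : Formula
  | bot : Formula
  | and : Formula → Formula → Formula
  | or : Formula → Formula → Formula
  | himp : Formula → Formula → Formula
  | imp : Formula → Formula → Formula
  | nabla : Formula → Formula

/-- `nIter n A` is `∇ⁿ A`. -/
def nIter (n : ℕ) (A : Formula) : Formula := Formula.nabla^[n] A

/-- The G3-style cut-free sequent calculus `iK_d`, indexed by an upper bound on
the height of the proof-tree. -/
inductive iKd : ℕ → Multiset Formula → Option Formula → Prop where
  | idp (h : ℕ) (p : ℕ) : iKd h {Formula.atom p} (some (Formula.atom p))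
  | lbot (h : ℕ) : iKd h {Formula.bot} none
  | rtop (h : ℕ) : iKd h 0 (some Formula.top)
  | lw {h : ℕ} {Γ : Multiset Formula} {Δ : Option Formula} (Sig : Multiset Formula) :
      iKd h Γ Δ → iKd (h + 1) (Γ + Sig) Δ
  | rw {h : ℕ} {Γ : Multiset Formula} (A : Formula) :
      iKd h Γ none → iKd (h + 1) Γ (some A)
  | landn {h : ℕ} {Γ : Multiset Formula} {Δ : Option Formula} (n : ℕ) (A B : Formula) :
      iKd h (nIter n A ::ₘ nIter n B ::ₘ Γ) Δ →
      iKd (h + 1) (nIter n (Formula.and A B) ::ₘ Γ) Δ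
  | rand {h : ℕ} {Γ : Multiset Formula} {A B : Formula} :
      iKd h Γ (some A) → iKd h Γ (some B) → iKd (h + 1) Γ (some (Formula.and A B))
  | lorn {h : ℕ} {Γ : Multiset Formula} {Δ : Option Formula} (n : ℕ) (A B : Formula) :
      iKd h (nIter n A ::ₘ Γ) Δ → iKd h (nIter n B ::ₘ Γ) Δ →
      iKd (h + 1) (nIter n (Formula.or A B) ::ₘ Γ) Δ
  | ror1 {h : ℕ} {Γ : Multiset Formula} {A : Formula} (B : Formula) :
      iKd h Γ (some A) → iKd (h + 1) Γ (some (Formula.or A B))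
  | ror2 {h : ℕ} {Γ : Multiset Formula} {B : Formula} (A : Formula) :
      iKd h Γ (some B) → iKd (h + 1) Γ (some (Formula.or A B))
  | limpn {h : ℕ} {Γ : Multiset Formula} {Δ : Option Formula} (n : ℕ) (A B : Formula) :
      iKd h (nIter (n + 1) (Formula.imp A B) ::ₘ Γ) (some (nIter n A)) →
      iKd h (nIter n B ::ₘ nIter (n + 1) (Formula.imp A B) ::ₘ Γ) Δ →
      iKd (h + 1) (nIter (n + 1) (Formula.imp A B) ::ₘ Γ) Δ
  | rimp {h : ℕ} {Γ : Multiset Formula} {A B : Formula} :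
      iKd h (A ::ₘ Γ.map Formula.nabla) (some B) →
      iKd (h + 1) Γ (some (Formula.imp A B))
  | lhimpn {h : ℕ} {Γ : Multiset Formula} {Δ : Option Formula} (n : ℕ) (A B : Formula) :
      iKd h (nIter n (Formula.himp A B) ::ₘ Γ) (some (nIter n A)) →
      iKd h (nIter n B ::ₘ Γ) Δ →
      iKd (h + 1) (nIter n (Formula.himp A B) ::ₘ Γ) Δ
  | rhimp {h : ℕ} {Γ : Multiset Formula} {A B : Formula} :
      iKd h (A ::ₘ Γ) (some B) → iKd (h + 1) Γ (some (Formula.himp A B))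
  | nrule {h : ℕ} {Γ : Multiset Formula} {Δ : Option Formula} :
      iKd h Γ Δ → iKd (h + 1) (Γ.map Formula.nabla) (Δ.map Formula.nabla)

/-- Provability in `iK_d`: provable with some height. -/
def iKdProvable (Γ : Multiset Formula) (Δ : Option Formula) : Prop := ∃ h, iKd h Γ Δ

lemma iKd.succ' {h : ℕ} {Γ : Multiset Formula} {Δ : Option Formula}
    (d : iKd h Γ Δ) : iKd (h + 1) Γ Δ := by
  simpa using iKd.lw 0 d

lemma iKd.mono' {h h' : ℕ} {Γ : Multiset Formula} {Δ : Option Formula}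
    (d : iKd h Γ Δ) (hle : h ≤ h') : iKd h' Γ Δ := by
  induction hle with
  | refl => exact d
  | step _ ih => exact ih.succ'

lemma iKd.cast' {h : ℕ} {Γ Γ' : Multiset Formula} {Δ : Option Formula}
    (e : Γ = Γ') (d : iKd h Γ Δ) : iKd h Γ' Δ := e ▸ d

/-- The general identity axiom is admissible in `iK_d`. -/
theorem iKd_id_admissible (A : Formula) : iKdProvable {A} (some A) := by
  induction A with
  | atom p => exact ⟨0, iKd.idp 0 p⟩
  | top =>
      refine ⟨1, ?_⟩
      simpa using iKd.lw {Formula.top} (iKd.rtop 0)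
  | bot => exact ⟨1, iKd.rw Formula.bot (iKd.lbot 0)⟩
  | and A B ihA ihB =>
      obtain ⟨h1, d1⟩ := ihA
      obtain ⟨h2, d2⟩ := ihB
      have d1 : iKd (max h1 h2) {A} (some A) := d1.mono' (le_max_left _ _)
      have d2 : iKd (max h1 h2) {B} (some B) := d2.mono' (le_max_right _ _)
      set h := max h1 h2 with hh
      have pA : iKd (h + 1) (A ::ₘ B ::ₘ 0) (some A) :=
        (iKd.lw {B} d1).cast' (by simp [Multiset.singleton_add])
      have pB : iKd (h + 1) (A ::ₘ B ::ₘ 0) (some B) :=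
        (iKd.lw {A} d2).cast' ((Multiset.singleton_add B {A}).trans
          (Multiset.cons_swap _ _ _))
      have lA : iKd (h + 2) (Formula.and A B ::ₘ 0) (some A) := iKd.landn 0 A B pA
      have lB : iKd (h + 2) (Formula.and A B ::ₘ 0) (some B) := iKd.landn 0 A B pB
      exact ⟨h + 3, iKd.rand lA lB⟩
  | or A B ihA ihB =>
      obtain ⟨h1, d1⟩ := ihA
      obtain ⟨h2, d2⟩ := ihB
      have d1 : iKd (max h1 h2) {A} (some A) := d1.mono' (le_max_left _ _)
      have d2 : iKd (max h1 h2) {B} (some B) := d2.mono' (le_max_right _ _)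
      set h := max h1 h2 with hh
      have pA : iKd (h + 1) (A ::ₘ 0) (some (Formula.or A B)) := iKd.ror1 B d1
      have pB : iKd (h + 1) (B ::ₘ 0) (some (Formula.or A B)) := iKd.ror2 A d2
      exact ⟨h + 2, iKd.lorn 0 A B pA pB⟩
  | himp A B ihA ihB =>
      obtain ⟨h1, d1⟩ := ihA
      obtain ⟨h2, d2⟩ := ihB
      have d1 : iKd (max h1 h2) {A} (some A) := d1.mono' (le_max_left _ _)
      have d2 : iKd (max h1 h2) {B} (some B) := d2.mono' (le_max_right _ _)
      set h := max h1 h2 with hh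
      have p1 : iKd (h + 1) (Formula.himp A B ::ₘ {A}) (some A) :=
        (iKd.lw {Formula.himp A B} d1).cast' ((Multiset.singleton_add A _).trans
          (Multiset.cons_swap _ _ _))
      have p2 : iKd (h + 1) (B ::ₘ {A}) (some B) :=
        (iKd.lw {A} d2).cast' (by simp [Multiset.singleton_add])
      have l : iKd (h + 2) (Formula.himp A B ::ₘ {A}) (some B) :=
        iKd.lhimpn 0 A B p1 p2
      have l' : iKd (h + 2) (A ::ₘ {Formula.himp A B}) (some B) :=
        l.cast' (Multiset.cons_swap _ _ _)
      exact ⟨h + 3, iKd.rhimp l'⟩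
  | imp A B ihA ihB =>
      obtain ⟨h1, d1⟩ := ihA
      obtain ⟨h2, d2⟩ := ihB
      have d1 : iKd (max h1 h2) {A} (some A) := d1.mono' (le_max_left _ _)
      have d2 : iKd (max h1 h2) {B} (some B) := d2.mono' (le_max_right _ _)
      set h := max h1 h2 with hh
      have p1 : iKd (h + 1) (Formula.nabla (Formula.imp A B) ::ₘ {A}) (some A) :=
        (iKd.lw {Formula.nabla (Formula.imp A B)} d1).cast' ((Multiset.singleton_add A _).trans
          (Multiset.cons_swap _ _ _))
      have p2 : iKd (h + 1)
          (B ::ₘ Formula.nabla (Formula.imp A B) ::ₘ {A}) (some B) :=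
        (iKd.lw {Formula.nabla (Formula.imp A B), A} d2).cast' (by
          simp only [Multiset.singleton_add, Multiset.insert_eq_cons])
      have l : iKd (h + 2) (Formula.nabla (Formula.imp A B) ::ₘ {A}) (some B) :=
        iKd.limpn 0 A B p1 p2
      have l' : iKd (h + 2) (A ::ₘ ({Formula.imp A B} : Multiset Formula).map Formula.nabla)
          (some B) := l.cast' (by
          rw [Multiset.map_singleton]; exact (Multiset.cons_swap _ _ _))
      exact ⟨h + 3, iKd.rimp l'⟩
  | nabla A ihA =>
      obtain ⟨h1, d1⟩ := ihA
      refine ⟨h1 + 1, ?_⟩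
      simpa using iKd.nrule d1
end

section
/- If the sequent Γ, A ⇒ Δ is provable in iK_d, then so is Γ, ∇□A ⇒ Δ, where □A abbreviates ⊤ → A. -/
lemma nIter_zero (A : Formula) : nIter 0 A = A := rfl
lemma nIter_one (A : Formula) : nIter 1 A = Formula.nabla A := rfl

theorem iKd_nabla_box_left (Γ : Multiset Formula) (Δ : Option Formula) (A : Formula)
    (h : iKdProvable (A ::ₘ Γ) Δ) :
    iKdProvable (Formula.nabla (Formula.imp Formula.top A) ::ₘ Γ) Δ := by
  obtain ⟨h, H⟩ := h
  refine ⟨h + 2, ?_⟩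
  have e1 : nIter (0 + 1) (Formula.imp Formula.top A) = Formula.nabla (Formula.imp Formula.top A) := rfl
  have P1 : iKd (h + 1)
      (nIter (0 + 1) (Formula.imp Formula.top A) ::ₘ Γ) (some (nIter 0 Formula.top)) := by
    have := iKd.lw (h := h) (nIter (0 + 1) (Formula.imp Formula.top A) ::ₘ Γ) (iKd.rtop h)
    simpa [nIter_zero] using this
  have P2 : iKd (h + 1)
      (nIter 0 A ::ₘ nIter (0 + 1) (Formula.imp Formula.top A) ::ₘ Γ) Δ := by
    have := iKd.lw ({nIter (0 + 1) (Formula.imp Formula.top A)} : Multiset Formula) H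
    have e : (A ::ₘ Γ) + {nIter (0 + 1) (Formula.imp Formula.top A)}
        = nIter 0 A ::ₘ nIter (0 + 1) (Formula.imp Formula.top A) ::ₘ Γ := by
      simp only [nIter_zero]
      rw [add_comm, Multiset.singleton_add, Multiset.cons_swap]
    rwa [e] at this
  have := iKd.limpn 0 Formula.top A P1 P2
  simpa [e1] using this
end

section
/- If Γ ⇒ A is provable in iK_d, then □Γ ⇒ □A is provable in iK_d, where □C abbreviates ⊤ → C and □Γ applies □ to every element of Γ. -/
deriving instance DecidableEq for Formula

lemma iKd_mono {h h' : ℕ} {Γ : Multiset Formula} {Δ : Option Formula}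
    (hle : h ≤ h') (hd : iKd h Γ Δ) : iKd h' Γ Δ := by
  induction hle with
  | refl => exact hd
  | step _ ih =>
    have := iKd.lw (h := _) (Γ := Γ) (Δ := Δ) 0 ih
    simpa using this

lemma iKd_unbox (Γ Ξ : Multiset Formula) (Δ : Option Formula)
    (hd : iKdProvable (Γ + Ξ) Δ) :
    iKdProvable (Γ.map (fun C => Formula.nabla (Formula.imp Formula.top C)) + Ξ) Δ := by
  induction Γ using Multiset.induction generalizing Ξ with
  | empty => simpa using hd
  | cons C Γ ih =>
    have h1 : iKdProvable (Γ + (C ::ₘ Ξ)) Δ := by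
      have : Γ + (C ::ₘ Ξ) = C ::ₘ Γ + Ξ := by
        simp [Multiset.add_cons, Multiset.cons_add]
      rw [this]; simpa using hd
    obtain ⟨h, hp⟩ := ih (C ::ₘ Ξ) h1
    -- hp : iKd h (Γ.map f + (C ::ₘ Ξ)) Δ
    set f : Formula → Formula := fun C => Formula.nabla (Formula.imp Formula.top C) with hf
    -- premise 2 : C ::ₘ f C ::ₘ (Γ.map f + Ξ) ⇒ Δ
    have p2 : iKd (h + 1) (nIter 0 C ::ₘ nIter 1 (Formula.imp Formula.top C) ::ₘ
        (Γ.map f + Ξ)) Δ := by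
      have := iKd.lw (Sig := {f C}) hp
      have heq : Γ.map f + (C ::ₘ Ξ) + {f C} =
          nIter 0 C ::ₘ nIter 1 (Formula.imp Formula.top C) ::ₘ (Γ.map f + Ξ) := by
        simp [nIter, hf]
        refine Multiset.ext.mpr fun x => ?_
        simp [Multiset.count_cons, Multiset.count_add]
        simp [Multiset.count_singleton]
      rwa [heq] at this
    -- premise 1 : f C ::ₘ (Γ.map f + Ξ) ⇒ ⊤
    have p1 : iKd (h + 1) (nIter 1 (Formula.imp Formula.top C) ::ₘ (Γ.map f + Ξ))
        (some (nIter 0 Formula.top)) := by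
      have := iKd.lw (Sig := nIter 1 (Formula.imp Formula.top C) ::ₘ (Γ.map f + Ξ))
        (iKd.rtop h)
      simpa [nIter] using this
    have := iKd.limpn (n := 0) (A := Formula.top) (B := C) p1 p2
    refine ⟨h + 1 + 1, ?_⟩
    have heq : (C ::ₘ Γ).map f + Ξ =
        nIter 1 (Formula.imp Formula.top C) ::ₘ (Γ.map f + Ξ) := by
      simp [nIter, hf, Multiset.cons_add]
    rwa [heq]

theorem iKd_box_rule (Γ : Multiset Formula) (A : Formula)
    (h : iKdProvable Γ (some A)) :
    iKdProvable (Γ.map (fun C => Formula.imp Formula.top C))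
      (some (Formula.imp Formula.top A)) := by
  obtain ⟨n, hp⟩ := h
  have h1 : iKdProvable (Γ + {Formula.top}) (some A) :=
    ⟨n + 1, iKd.lw {Formula.top} hp⟩
  obtain ⟨m, hm⟩ := iKd_unbox Γ {Formula.top} (some A) h1
  refine ⟨m + 1, ?_⟩
  apply iKd.rimp
  have heq : Formula.top ::ₘ (Γ.map (fun C => Formula.imp Formula.top C)).map Formula.nabla
      = Γ.map (fun C => Formula.nabla (Formula.imp Formula.top C)) + {Formula.top} := by
    simp [Multiset.map_map, Function.comp]
    refine Multiset.ext.mpr fun x => ?_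
    simp [Multiset.count_cons, Multiset.count_add]
    simp [Multiset.count_singleton]
  rwa [heq]
end

section
/- No sequent of the form {A_i → B_i : i ∈ I} ⇒ (with empty succedent), where I is a finite index set, is provable in iK_d. -/
/-
Induct on the derivation. A rule concluding a sequent with empty succedent is `⊥ ⇒`, left
weakening, rule N, or a left rule whose principal formula `∇ⁿ(A ∧ B)`, `∇ⁿ(A ∨ B)`, `∇ⁿ(A ⊃ B)`
or `∇ⁿ⁺¹(A → B)` is not an implication. With an antecedent of implications only weakening and
rule N remain, and rule N then has an empty antecedent, since no `∇C` is an implication.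
-/

namespace Formula

def IsImp : Formula → Prop
  | imp _ _ => True
  | _ => False

theorem isImp_imp (A B : Formula) : (imp A B).IsImp := trivial

theorem not_isImp_nIter_succ (n : ℕ) (A : Formula) : ¬ (nIter (n + 1) A).IsImp := by
  rw [nIter, Function.iterate_succ_apply']
  exact id

theorem IsImp.of_nIter {n : ℕ} {A : Formula} (h : (nIter n A).IsImp) : A.IsImp := by
  cases n with
  | zero => exact h
  | succ n => exact absurd h (not_isImp_nIter_succ n A)

theorem eq_zero_of_forall_isImp_map_nabla {Γ : Multiset Formula}
    (hΓ : ∀ F ∈ Γ.map nabla, F.IsImp) : Γ = 0 :=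
  Multiset.eq_zero_of_forall_notMem fun C hC => hΓ (nabla C) (Multiset.mem_map_of_mem _ hC)

end Formula

open Formula

theorem iKd.ne_none_of_forall_isImp {h : ℕ} {Γ : Multiset Formula} {Δ : Option Formula}
    (d : iKd h Γ Δ) (hΓ : ∀ F ∈ Γ, F.IsImp) : Δ ≠ none := by
  induction d with
  | idp | rtop | rw | rand | ror1 | ror2 | rimp | rhimp => exact Option.some_ne_none _
  | lbot => nomatch hΓ _ (Multiset.mem_singleton_self _)
  | lw _ _ ih => exact ih fun F hF => hΓ F (Multiset.mem_add.2 (Or.inl hF))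
  | landn | lorn | lhimpn => nomatch (hΓ _ (Multiset.mem_cons_self _ _)).of_nIter
  | limpn n => exact absurd (hΓ _ (Multiset.mem_cons_self _ _)) (not_isImp_nIter_succ n _)
  | nrule _ ih =>
    obtain rfl := eq_zero_of_forall_isImp_map_nabla hΓ
    simpa using ih (by simp)

theorem iKd_no_empty_succedent_from_imps (Γ : Multiset (Formula × Formula)) :
    ¬ iKdProvable (Γ.map (fun p => Formula.imp p.1 p.2)) none := by
  rintro ⟨h, d⟩
  refine d.ne_none_of_forall_isImp (fun F hF => ?_) rfl
  obtain ⟨p, -, rfl⟩ := Multiset.mem_map.1 hF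
  exact isImp_imp p.1 p.2
end

section
/- (Disjunction property) If the sequent ⇒ A ∨ B is provable in iK_d, then either ⇒ A is provable or ⇒ B is provable in iK_d. -/
lemma iKd_disj_aux : ∀ {h : ℕ} {Γ : Multiset Formula} {Δ : Option Formula},
    iKd h Γ Δ → ∀ A B, Γ = 0 → Δ = some (Formula.or A B) →
    iKdProvable 0 (some A) ∨ iKdProvable 0 (some B) := by
  intro h Γ Δ d
  induction d with
  | idp h p => intro A B hΓ hΔ; simp at hΓ
  | lbot h => intro A B hΓ hΔ; simp at hΔ
  | rtop h => intro A B hΓ hΔ; simp at hΔ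
  | lw Sig d ih =>
      intro A B hΓ hΔ
      rcases (by simpa using hΓ : _ ∧ _) with ⟨h1, h2⟩
      exact ih A B h1 hΔ
  | rw A' d ih =>
      intro A B hΓ hΔ
      subst hΓ
      exact Or.inl ⟨_, iKd.rw A d⟩
  | landn n A' B' d ih => intro A B hΓ hΔ; simp at hΓ
  | rand d1 d2 ih1 ih2 => intro A B hΓ hΔ; simp at hΔ
  | lorn n A' B' d1 d2 ih1 ih2 => intro A B hΓ hΔ; simp at hΓ
  | ror1 B' d ih =>
      intro A B hΓ hΔ
      subst hΓ
      simp only [Option.some.injEq, Formula.or.injEq] at hΔ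
      obtain ⟨h1, h2⟩ := hΔ
      subst h1
      exact Or.inl ⟨_, d⟩
  | ror2 A' d ih =>
      intro A B hΓ hΔ
      subst hΓ
      simp only [Option.some.injEq, Formula.or.injEq] at hΔ
      obtain ⟨h1, h2⟩ := hΔ
      subst h2
      exact Or.inr ⟨_, d⟩
  | limpn n A' B' d1 d2 ih1 ih2 => intro A B hΓ hΔ; simp at hΓ
  | rimp d ih => intro A B hΓ hΔ; simp at hΔ
  | lhimpn n A' B' d1 d2 ih1 ih2 => intro A B hΓ hΔ; simp at hΓ
  | rhimp d ih => intro A B hΓ hΔ; simp at hΔ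
  | nrule d ih =>
      intro A B hΓ hΔ
      rename_i h' Γ' Δ'
      cases Δ' <;> simp at hΔ

/-- Disjunction property of `iK_d`. -/
theorem iKd_disjunction_property (A B : Formula)
    (h : iKdProvable 0 (some (Formula.or A B))) :
    iKdProvable 0 (some A) ∨ iKdProvable 0 (some B) := by
  obtain ⟨n, d⟩ := h
  exact iKd_disj_aux d A B rfl rfl
end

section
/- (Maehara-style interpolation for iK_d) If Γ₁, Γ₂ ⇒ Δ is provable in iK_d, then there exists a formula C such that Γ₁ ⇒ C and Γ₂, C ⇒ Δ are provable in iK_d and every atomic proposition occurring in C occurs both in Γ₁ and in Γ₂ ∪ Δ. -/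
/-- The set of atoms occurring in a formula. -/
def Formula.atoms : Formula → Finset ℕ
  | Formula.atom p => {p}
  | Formula.top => ∅
  | Formula.bot => ∅
  | Formula.and A B => A.atoms ∪ B.atoms
  | Formula.or A B => A.atoms ∪ B.atoms
  | Formula.himp A B => A.atoms ∪ B.atoms
  | Formula.imp A B => A.atoms ∪ B.atoms
  | Formula.nabla A => A.atoms

/-!
Interpolants are built by induction on the derivation, simultaneously for every split
`Γ₁ + Γ₂` of the antecedent (Maehara's method). For a two-premise left rule, a principal formula
in `Γ₁` gives `C₁ ∨ C₂` (`L∨`) or `C₁ ⊃ C₂` (`L→`, `L⊃`, whose first premise is interpolated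
with the two sides exchanged), and one in `Γ₂` gives `C₁ ∧ C₂`. The rule `N` is handled by `∇C`,
and `R→` by `⊤ → C`: this formula follows from `∇Γ₁ ⇒ C` by `R→`, and `L→⁰` recovers `C` from
`∇(⊤ → C)`.
-/

namespace Multiset

variable {α β : Type*}

theorem add_eq_cons {a : α} {s t u : Multiset α} (h : t + u = a ::ₘ s) :
    (∃ t', t = a ::ₘ t' ∧ t' + u = s) ∨ ∃ u', u = a ::ₘ u' ∧ t + u' = s := by
  rcases mem_add.1 (h ▸ mem_cons_self a s) with ha | ha
  · obtain ⟨t', rfl⟩ := exists_cons_of_mem ha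
    exact .inl ⟨t', rfl, by simpa [cons_add] using h⟩
  · obtain ⟨u', rfl⟩ := exists_cons_of_mem ha
    exact .inr ⟨u', rfl, by simpa [add_cons] using h⟩

theorem add_eq_map {f : α → β} {s : Multiset α} {t u : Multiset β} (h : t + u = s.map f) :
    ∃ t' u', t' + u' = s ∧ t'.map f = t ∧ u'.map f = u := by
  induction s using Multiset.induction_on generalizing t u with
  | empty =>
    obtain ⟨rfl, rfl⟩ := add_eq_zero.1 h
    exact ⟨0, 0, rfl, rfl, rfl⟩
  | cons a s ih =>
    rw [map_cons] at h
    rcases add_eq_cons h with ⟨t₀, rfl, h₀⟩ | ⟨u₀, rfl, h₀⟩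
    · obtain ⟨t', u', rfl, rfl, rfl⟩ := ih h₀
      exact ⟨a ::ₘ t', u', cons_add .., map_cons .., rfl⟩
    · obtain ⟨t', u', rfl, rfl, rfl⟩ := ih h₀
      exact ⟨t', a ::ₘ u', add_cons .., rfl, map_cons ..⟩

end Multiset

@[simp] theorem atoms_nIter (n : ℕ) (A : Formula) : (nIter n A).atoms = A.atoms := by
  induction n generalizing A with
  | zero => rfl
  | succ n ih => exact ih A.nabla

attribute [simp] Formula.atoms

def ctxAtoms (Γ : Multiset Formula) : Finset ℕ := (Γ.map Formula.atoms).sup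

def goalAtoms : Option Formula → Finset ℕ
  | none => ∅
  | some A => A.atoms

@[simp] theorem ctxAtoms_zero : ctxAtoms 0 = ∅ := rfl

@[simp] theorem ctxAtoms_cons (A : Formula) (Γ : Multiset Formula) :
    ctxAtoms (A ::ₘ Γ) = A.atoms ∪ ctxAtoms Γ := by
  simp [ctxAtoms]

@[simp] theorem ctxAtoms_singleton (A : Formula) : ctxAtoms {A} = A.atoms := by
  simp [ctxAtoms]

@[simp] theorem ctxAtoms_add (Γ Γ' : Multiset Formula) :
    ctxAtoms (Γ + Γ') = ctxAtoms Γ ∪ ctxAtoms Γ' := by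
  simp [ctxAtoms]

@[simp] theorem ctxAtoms_map_nabla (Γ : Multiset Formula) :
    ctxAtoms (Γ.map .nabla) = ctxAtoms Γ := by
  simp [ctxAtoms, Function.comp_def]

theorem mem_ctxAtoms {p : ℕ} {Γ : Multiset Formula} : p ∈ ctxAtoms Γ ↔ ∃ A ∈ Γ, p ∈ A.atoms := by
  induction Γ using Multiset.induction_on <;> simp [*]

@[simp] theorem goalAtoms_none : goalAtoms none = ∅ := rfl

@[simp] theorem goalAtoms_some (A : Formula) : goalAtoms (some A) = A.atoms := rfl

@[simp] theorem goalAtoms_map_nabla (Δ : Option Formula) :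
    goalAtoms (Δ.map .nabla) = goalAtoms Δ := by
  cases Δ <;> rfl

theorem mem_goalAtoms {p : ℕ} {Δ : Option Formula} : p ∈ goalAtoms Δ ↔ ∃ D ∈ Δ, p ∈ D.atoms := by
  cases Δ <;> simp

theorem iKd.height_mono {h h' : ℕ} {Γ : Multiset Formula} {Δ : Option Formula}
    (hh : h ≤ h') (D : iKd h Γ Δ) : iKd h' Γ Δ := by
  induction hh with
  | refl => exact D
  | step _ ih => simpa using ih.lw 0

namespace iKdProvable

variable {Γ Γ' : Multiset Formula} {Δ : Option Formula}

theorem weaken (H : iKdProvable Γ Δ) (hΓ : Γ ≤ Γ') : iKdProvable Γ' Δ := by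
  obtain ⟨h, D⟩ := H
  obtain ⟨S, rfl⟩ := Multiset.le_iff_exists_add.1 hΓ
  exact ⟨h + 1, D.lw S⟩

theorem cons (H : iKdProvable Γ Δ) (A : Formula) : iKdProvable (A ::ₘ Γ) Δ :=
  H.weaken (Multiset.le_cons_self Γ A)

theorem swap {A B : Formula} (H : iKdProvable (A ::ₘ B ::ₘ Γ) Δ) :
    iKdProvable (B ::ₘ A ::ₘ Γ) Δ :=
  Multiset.cons_swap A B Γ ▸ H

theorem cons₂ {A : Formula} (H : iKdProvable (A ::ₘ Γ) Δ) (B : Formula) :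
    iKdProvable (A ::ₘ B ::ₘ Γ) Δ :=
  (H.cons B).swap

theorem idp (p : ℕ) : iKdProvable {.atom p} (some (.atom p)) := ⟨0, .idp 0 p⟩

theorem bot : iKdProvable {.bot} none := ⟨0, .lbot 0⟩

theorem top (Γ : Multiset Formula) : iKdProvable Γ (some .top) :=
  weaken ⟨0, .rtop 0⟩ (Multiset.zero_le Γ)

theorem rw (H : iKdProvable Γ none) (A : Formula) : iKdProvable Γ (some A) :=
  let ⟨h, D⟩ := H; ⟨h + 1, D.rw A⟩

theorem nrule (H : iKdProvable Γ Δ) : iKdProvable (Γ.map .nabla) (Δ.map .nabla) :=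
  let ⟨h, D⟩ := H; ⟨h + 1, D.nrule⟩

theorem landn {n : ℕ} {A B : Formula} (H : iKdProvable (nIter n A ::ₘ nIter n B ::ₘ Γ) Δ) :
    iKdProvable (nIter n (A.and B) ::ₘ Γ) Δ :=
  let ⟨h, D⟩ := H; ⟨h + 1, D.landn n A B⟩

theorem ror1 {A : Formula} (H : iKdProvable Γ (some A)) (B : Formula) :
    iKdProvable Γ (some (A.or B)) :=
  let ⟨h, D⟩ := H; ⟨h + 1, D.ror1 B⟩

theorem ror2 {B : Formula} (H : iKdProvable Γ (some B)) (A : Formula) :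
    iKdProvable Γ (some (A.or B)) :=
  let ⟨h, D⟩ := H; ⟨h + 1, D.ror2 A⟩

theorem rimp {A B : Formula} (H : iKdProvable (A ::ₘ Γ.map .nabla) (some B)) :
    iKdProvable Γ (some (A.imp B)) :=
  let ⟨h, D⟩ := H; ⟨h + 1, D.rimp⟩

theorem rhimp {A B : Formula} (H : iKdProvable (A ::ₘ Γ) (some B)) :
    iKdProvable Γ (some (A.himp B)) :=
  let ⟨h, D⟩ := H; ⟨h + 1, D.rhimp⟩

theorem rand {A B : Formula} (H₁ : iKdProvable Γ (some A)) (H₂ : iKdProvable Γ (some B)) :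
    iKdProvable Γ (some (A.and B)) :=
  let ⟨h₁, D₁⟩ := H₁; let ⟨h₂, D₂⟩ := H₂
  ⟨max h₁ h₂ + 1, .rand (D₁.height_mono (le_max_left ..)) (D₂.height_mono (le_max_right ..))⟩

theorem lorn {n : ℕ} {A B : Formula} (H₁ : iKdProvable (nIter n A ::ₘ Γ) Δ)
    (H₂ : iKdProvable (nIter n B ::ₘ Γ) Δ) : iKdProvable (nIter n (A.or B) ::ₘ Γ) Δ :=
  let ⟨h₁, D₁⟩ := H₁; let ⟨h₂, D₂⟩ := H₂
  ⟨max h₁ h₂ + 1,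
    .lorn n A B (D₁.height_mono (le_max_left ..)) (D₂.height_mono (le_max_right ..))⟩

theorem limpn {n : ℕ} {A B : Formula}
    (H₁ : iKdProvable (nIter (n + 1) (A.imp B) ::ₘ Γ) (some (nIter n A)))
    (H₂ : iKdProvable (nIter n B ::ₘ nIter (n + 1) (A.imp B) ::ₘ Γ) Δ) :
    iKdProvable (nIter (n + 1) (A.imp B) ::ₘ Γ) Δ :=
  let ⟨h₁, D₁⟩ := H₁; let ⟨h₂, D₂⟩ := H₂
  ⟨max h₁ h₂ + 1,
    .limpn n A B (D₁.height_mono (le_max_left ..)) (D₂.height_mono (le_max_right ..))⟩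

theorem lhimpn {n : ℕ} {A B : Formula}
    (H₁ : iKdProvable (nIter n (A.himp B) ::ₘ Γ) (some (nIter n A)))
    (H₂ : iKdProvable (nIter n B ::ₘ Γ) Δ) : iKdProvable (nIter n (A.himp B) ::ₘ Γ) Δ :=
  let ⟨h₁, D₁⟩ := H₁; let ⟨h₂, D₂⟩ := H₂
  ⟨max h₁ h₂ + 1,
    .lhimpn n A B (D₁.height_mono (le_max_left ..)) (D₂.height_mono (le_max_right ..))⟩

theorem and_left {A : Formula} (H : iKdProvable (A ::ₘ Γ) Δ) (B : Formula) :
    iKdProvable (A.and B ::ₘ Γ) Δ :=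
  landn (n := 0) (H.cons₂ B)

theorem and_right {B : Formula} (H : iKdProvable (B ::ₘ Γ) Δ) (A : Formula) :
    iKdProvable (A.and B ::ₘ Γ) Δ :=
  landn (n := 0) (H.cons A)

end iKdProvable

structure IsInterpolant (Γ₁ Γ₂ : Multiset Formula) (Δ : Option Formula) (C : Formula) :
    Prop where
  left : iKdProvable Γ₁ (some C)
  right : iKdProvable (C ::ₘ Γ₂) Δ
  atoms_left : C.atoms ⊆ ctxAtoms Γ₁
  atoms_right : C.atoms ⊆ ctxAtoms Γ₂ ∪ goalAtoms Δ

def Interpolable (Γ : Multiset Formula) (Δ : Option Formula) : Prop :=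
  ∀ Γ₁ Γ₂, Γ₁ + Γ₂ = Γ → ∃ C, IsInterpolant Γ₁ Γ₂ Δ C

namespace IsInterpolant

variable {Γ₁ Γ₂ Γ₁' Γ₂' : Multiset Formula} {Δ Δ' : Option Formula} {C : Formula}

theorem mono_left (hC : IsInterpolant Γ₁ Γ₂ Δ C)
    (hP : iKdProvable Γ₁ (some C) → iKdProvable Γ₁' (some C))
    (hA : ctxAtoms Γ₁ ⊆ ctxAtoms Γ₁') : IsInterpolant Γ₁' Γ₂ Δ C :=
  ⟨hP hC.left, hC.right, hC.atoms_left.trans hA, hC.atoms_right⟩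

theorem mono_right (hC : IsInterpolant Γ₁ Γ₂ Δ C)
    (hP : iKdProvable (C ::ₘ Γ₂) Δ → iKdProvable (C ::ₘ Γ₂') Δ')
    (hA : ctxAtoms Γ₂ ∪ goalAtoms Δ ⊆ ctxAtoms Γ₂' ∪ goalAtoms Δ') :
    IsInterpolant Γ₁ Γ₂' Δ' C :=
  ⟨hC.left, hP hC.right, hC.atoms_left, hC.atoms_right.trans hA⟩

theorem top (H : iKdProvable Γ₂ Δ) : IsInterpolant 0 Γ₂ Δ .top :=
  ⟨.top 0, H.cons _, by simp, by simp⟩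

theorem and {Γ₃ : Multiset Formula} {Δ₁ Δ₂ : Option Formula} {C₁ C₂ : Formula}
    (h₁ : IsInterpolant Γ₁ Γ₂ Δ₁ C₁) (h₂ : IsInterpolant Γ₁ Γ₂' Δ₂ C₂)
    (hP : iKdProvable (C₁.and C₂ ::ₘ Γ₂) Δ₁ → iKdProvable (C₁.and C₂ ::ₘ Γ₂') Δ₂ →
      iKdProvable (C₁.and C₂ ::ₘ Γ₃) Δ)
    (hA : ctxAtoms Γ₂ ∪ goalAtoms Δ₁ ∪ (ctxAtoms Γ₂' ∪ goalAtoms Δ₂) ⊆ ctxAtoms Γ₃ ∪ goalAtoms Δ) :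
    IsInterpolant Γ₁ Γ₃ Δ (C₁.and C₂) :=
  ⟨h₁.left.rand h₂.left, hP (h₁.right.and_left C₂) (h₂.right.and_right C₁),
    Finset.union_subset h₁.atoms_left h₂.atoms_left,
    (Finset.union_subset_union h₁.atoms_right h₂.atoms_right).trans hA⟩

theorem or {Γ₃ : Multiset Formula} {C₁ C₂ : Formula}
    (h₁ : IsInterpolant Γ₁ Γ₂ Δ C₁) (h₂ : IsInterpolant Γ₁' Γ₂ Δ C₂)
    (hP : iKdProvable Γ₁ (some (C₁.or C₂)) → iKdProvable Γ₁' (some (C₁.or C₂)) →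
      iKdProvable Γ₃ (some (C₁.or C₂)))
    (hA : ctxAtoms Γ₁ ∪ ctxAtoms Γ₁' ⊆ ctxAtoms Γ₃) :
    IsInterpolant Γ₃ Γ₂ Δ (C₁.or C₂) :=
  ⟨hP (h₁.left.ror1 C₂) (h₂.left.ror2 C₁), .lorn (n := 0) h₁.right h₂.right,
    (Finset.union_subset_union h₁.atoms_left h₂.atoms_left).trans hA,
    Finset.union_subset h₁.atoms_right h₂.atoms_right⟩

theorem himp {X C₁ C₂ : Formula} (h₁ : IsInterpolant Γ₂ Γ₁ (some X) C₁)
    (h₂ : IsInterpolant Γ₁' Γ₂ Δ C₂)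
    (hP : iKdProvable (C₁ ::ₘ Γ₁) (some X) → iKdProvable Γ₁' (some C₂) →
      iKdProvable (C₁ ::ₘ Γ₁) (some C₂))
    (hA : X.atoms ∪ ctxAtoms Γ₁' ⊆ ctxAtoms Γ₁) :
    IsInterpolant Γ₁ Γ₂ Δ (C₁.himp C₂) := by
  refine ⟨(hP h₁.right h₂.left).rhimp, .lhimpn (n := 0) (h₁.left.cons _) h₂.right, ?_, ?_⟩
  · have a₁ := h₁.atoms_right
    have a₂ := h₂.atoms_left
    simp at a₁ ⊢
    grind
  · have a₁ := h₁.atoms_left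
    have a₂ := h₂.atoms_right
    simp
    grind

end IsInterpolant

namespace Interpolable

variable {Γ : Multiset Formula} {Δ : Option Formula}

theorem singleton {X C : Formula} (hX : iKdProvable {X} Δ) (hC : IsInterpolant {X} 0 Δ C) :
    Interpolable {X} Δ := by
  intro Γ₁ Γ₂ e
  rcases Multiset.add_eq_cons (a := X) (s := 0) e with ⟨Γ₁', rfl, e'⟩ | ⟨Γ₂', rfl, e'⟩ <;>
    obtain ⟨rfl, rfl⟩ := add_eq_zero.1 e'
  exacts [⟨C, hC⟩, ⟨.top, .top hX⟩]

theorem idp (p : ℕ) : Interpolable {.atom p} (some (.atom p)) :=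
  singleton (.idp p) ⟨.idp p, .idp p, by simp, by simp⟩

theorem lbot : Interpolable {.bot} none :=
  singleton .bot ⟨iKdProvable.bot.rw _, .bot, by simp, by simp⟩

theorem rtop : Interpolable 0 (some .top) := by
  intro Γ₁ Γ₂ e
  obtain ⟨rfl, rfl⟩ := add_eq_zero.1 e
  exact ⟨.top, .top (.top 0)⟩

theorem cons (H : Interpolable Γ Δ) (A : Formula) : Interpolable (A ::ₘ Γ) Δ := by
  intro Γ₁ Γ₂ e
  rcases Multiset.add_eq_cons e with ⟨Γ₁, rfl, rfl⟩ | ⟨Γ₂, rfl, rfl⟩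
  · obtain ⟨C, hC⟩ := H Γ₁ Γ₂ rfl
    exact ⟨C, hC.mono_left (·.cons A) (by simp)⟩
  · obtain ⟨C, hC⟩ := H Γ₁ Γ₂ rfl
    exact ⟨C, hC.mono_right (·.cons₂ A) (by simp)⟩

theorem add (H : Interpolable Γ Δ) (S : Multiset Formula) : Interpolable (Γ + S) Δ := by
  induction S using Multiset.induction_on with
  | empty => simpa using H
  | cons A S ih => simpa [Multiset.add_cons] using ih.cons A

theorem rw (H : Interpolable Γ none) (A : Formula) : Interpolable Γ (some A) := fun Γ₁ Γ₂ e =>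
  let ⟨C, hC⟩ := H Γ₁ Γ₂ e
  ⟨C, hC.mono_right (·.rw A) (by simp)⟩

theorem landn {n : ℕ} {A B : Formula} (H : Interpolable (nIter n A ::ₘ nIter n B ::ₘ Γ) Δ) :
    Interpolable (nIter n (A.and B) ::ₘ Γ) Δ := by
  intro Γ₁ Γ₂ e
  rcases Multiset.add_eq_cons e with ⟨Γ₁, rfl, rfl⟩ | ⟨Γ₂, rfl, rfl⟩
  · obtain ⟨C, hC⟩ := H (nIter n A ::ₘ nIter n B ::ₘ Γ₁) Γ₂ (by simp)
    exact ⟨C, hC.mono_left .landn (by simp)⟩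
  · obtain ⟨C, hC⟩ := H Γ₁ (nIter n A ::ₘ nIter n B ::ₘ Γ₂) (by simp)
    refine ⟨C, hC.mono_right (fun h => ?_) (by simp)⟩
    exact (iKdProvable.landn (h.swap.weaken (by simp [Multiset.cons_swap]))).swap

theorem rand {A B : Formula} (H₁ : Interpolable Γ (some A)) (H₂ : Interpolable Γ (some B)) :
    Interpolable Γ (some (A.and B)) := fun Γ₁ Γ₂ e =>
  let ⟨_, h₁⟩ := H₁ Γ₁ Γ₂ e
  let ⟨_, h₂⟩ := H₂ Γ₁ Γ₂ e
  ⟨_, h₁.and h₂ .rand (by simp; grind)⟩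

theorem lorn {n : ℕ} {A B : Formula} (H₁ : Interpolable (nIter n A ::ₘ Γ) Δ)
    (H₂ : Interpolable (nIter n B ::ₘ Γ) Δ) : Interpolable (nIter n (A.or B) ::ₘ Γ) Δ := by
  intro Γ₁ Γ₂ e
  rcases Multiset.add_eq_cons e with ⟨Γ₁, rfl, rfl⟩ | ⟨Γ₂, rfl, rfl⟩
  · obtain ⟨_, h₁⟩ := H₁ (nIter n A ::ₘ Γ₁) Γ₂ (by simp)
    obtain ⟨_, h₂⟩ := H₂ (nIter n B ::ₘ Γ₁) Γ₂ (by simp)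
    exact ⟨_, h₁.or h₂ .lorn (by simp; grind)⟩
  · obtain ⟨_, h₁⟩ := H₁ Γ₁ (nIter n A ::ₘ Γ₂) (by simp)
    obtain ⟨_, h₂⟩ := H₂ Γ₁ (nIter n B ::ₘ Γ₂) (by simp)
    exact ⟨_, h₁.and h₂ (fun d₁ d₂ => (d₁.swap.lorn d₂.swap).swap) (by simp; grind)⟩

theorem ror1 {A : Formula} (H : Interpolable Γ (some A)) (B : Formula) :
    Interpolable Γ (some (A.or B)) := fun Γ₁ Γ₂ e =>
  let ⟨C, hC⟩ := H Γ₁ Γ₂ e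
  ⟨C, hC.mono_right (·.ror1 B) (by simp; grind)⟩

theorem ror2 {B : Formula} (H : Interpolable Γ (some B)) (A : Formula) :
    Interpolable Γ (some (A.or B)) := fun Γ₁ Γ₂ e =>
  let ⟨C, hC⟩ := H Γ₁ Γ₂ e
  ⟨C, hC.mono_right (·.ror2 A) (by simp; grind)⟩

theorem limpn {n : ℕ} {A B : Formula}
    (H₁ : Interpolable (nIter (n + 1) (A.imp B) ::ₘ Γ) (some (nIter n A)))
    (H₂ : Interpolable (nIter n B ::ₘ nIter (n + 1) (A.imp B) ::ₘ Γ) Δ) :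
    Interpolable (nIter (n + 1) (A.imp B) ::ₘ Γ) Δ := by
  intro Γ₁ Γ₂ e
  rcases Multiset.add_eq_cons e with ⟨Γ₁, rfl, rfl⟩ | ⟨Γ₂, rfl, rfl⟩
  · obtain ⟨_, h₁⟩ := H₁ Γ₂ (nIter (n + 1) (A.imp B) ::ₘ Γ₁) (by simp [add_comm])
    obtain ⟨_, h₂⟩ := H₂ (nIter n B ::ₘ nIter (n + 1) (A.imp B) ::ₘ Γ₁) Γ₂ (by simp)
    refine ⟨_, h₁.himp h₂ (fun d₁ d₂ => (d₁.swap.limpn (d₂.weaken ?_)).swap) (by simp; grind)⟩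
    simp [Multiset.le_cons_self]
  · obtain ⟨_, h₁⟩ := H₁ Γ₁ (nIter (n + 1) (A.imp B) ::ₘ Γ₂) (by simp)
    obtain ⟨_, h₂⟩ := H₂ Γ₁ (nIter n B ::ₘ nIter (n + 1) (A.imp B) ::ₘ Γ₂) (by simp)
    exact ⟨_, h₁.and h₂
      (fun d₁ d₂ => (d₁.swap.limpn (d₂.weaken (by simp [Multiset.cons_swap]))).swap)
      (by simp; grind)⟩

theorem rimp {A B : Formula} (H : Interpolable (A ::ₘ Γ.map .nabla) (some B)) :
    Interpolable Γ (some (A.imp B)) := by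
  rintro Γ₁ Γ₂ rfl
  obtain ⟨C, hC⟩ := H (Γ₁.map .nabla) (A ::ₘ Γ₂.map .nabla) (by simp)
  refine ⟨Formula.top.imp C, (hC.left.cons .top).rimp, .rimp ?_, by simpa using hC.atoms_left, ?_⟩
  · rw [Multiset.map_cons]
    exact (iKdProvable.limpn (n := 0) (.top _) (hC.right.cons₂ _)).swap
  · have := hC.atoms_right
    simp at this ⊢
    grind

theorem lhimpn {n : ℕ} {A B : Formula}
    (H₁ : Interpolable (nIter n (A.himp B) ::ₘ Γ) (some (nIter n A)))
    (H₂ : Interpolable (nIter n B ::ₘ Γ) Δ) : Interpolable (nIter n (A.himp B) ::ₘ Γ) Δ := by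
  intro Γ₁ Γ₂ e
  rcases Multiset.add_eq_cons e with ⟨Γ₁, rfl, rfl⟩ | ⟨Γ₂, rfl, rfl⟩
  · obtain ⟨_, h₁⟩ := H₁ Γ₂ (nIter n (A.himp B) ::ₘ Γ₁) (by simp [add_comm])
    obtain ⟨_, h₂⟩ := H₂ (nIter n B ::ₘ Γ₁) Γ₂ (by simp)
    exact ⟨_, h₁.himp h₂ (fun d₁ d₂ => (d₁.swap.lhimpn (d₂.cons₂ _)).swap) (by simp)⟩
  · obtain ⟨_, h₁⟩ := H₁ Γ₁ (nIter n (A.himp B) ::ₘ Γ₂) (by simp)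
    obtain ⟨_, h₂⟩ := H₂ Γ₁ (nIter n B ::ₘ Γ₂) (by simp)
    exact ⟨_, h₁.and h₂ (fun d₁ d₂ => (d₁.swap.lhimpn d₂.swap).swap) (by simp; grind)⟩

theorem rhimp {A B : Formula} (H : Interpolable (A ::ₘ Γ) (some B)) :
    Interpolable Γ (some (A.himp B)) := by
  rintro Γ₁ Γ₂ rfl
  obtain ⟨C, hC⟩ := H Γ₁ (A ::ₘ Γ₂) (by simp)
  exact ⟨C, hC.mono_right (·.swap.rhimp) (by simp; grind)⟩

theorem nrule (H : Interpolable Γ Δ) : Interpolable (Γ.map .nabla) (Δ.map .nabla) := by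
  intro Γ₁ Γ₂ e
  obtain ⟨Γ₁, Γ₂, rfl, rfl, rfl⟩ := Multiset.add_eq_map e
  obtain ⟨C, hC⟩ := H Γ₁ Γ₂ rfl
  exact ⟨C.nabla, hC.left.nrule, by simpa using hC.right.nrule, by simpa using hC.atoms_left,
    by simpa using hC.atoms_right⟩

end Interpolable

theorem iKd.interpolable {h : ℕ} {Γ : Multiset Formula} {Δ : Option Formula} (D : iKd h Γ Δ) :
    Interpolable Γ Δ := by
  induction D with
  | idp _ p => exact .idp p
  | lbot => exact .lbot
  | rtop => exact .rtop
  | lw S _ ih => exact ih.add S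
  | rw A _ ih => exact ih.rw A
  | landn _ _ _ _ ih => exact ih.landn
  | rand _ _ ih₁ ih₂ => exact ih₁.rand ih₂
  | lorn _ _ _ _ _ ih₁ ih₂ => exact ih₁.lorn ih₂
  | ror1 B _ ih => exact ih.ror1 B
  | ror2 A _ ih => exact ih.ror2 A
  | limpn _ _ _ _ _ ih₁ ih₂ => exact ih₁.limpn ih₂
  | rimp _ ih => exact ih.rimp
  | lhimpn _ _ _ _ _ ih₁ ih₂ => exact ih₁.lhimpn ih₂
  | rhimp _ ih => exact ih.rhimp
  | nrule _ ih => exact ih.nrule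

/-- Maehara-style interpolation for `iK_d`. -/
theorem iKd_interpolation (Γ₁ Γ₂ : Multiset Formula) (Δ : Option Formula)
    (H : iKdProvable (Γ₁ + Γ₂) Δ) :
    ∃ C : Formula, iKdProvable Γ₁ (some C) ∧ iKdProvable (C ::ₘ Γ₂) Δ ∧
      ∀ p ∈ C.atoms, (∃ A ∈ Γ₁, p ∈ A.atoms) ∧
        ((∃ A ∈ Γ₂, p ∈ A.atoms) ∨ ∃ D ∈ Δ, p ∈ D.atoms) := by
  obtain ⟨h, D⟩ := H
  obtain ⟨C, hC⟩ := D.interpolable Γ₁ Γ₂ rfl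
  refine ⟨C, hC.left, hC.right, fun p hp => ⟨mem_ctxAtoms.1 (hC.atoms_left hp), ?_⟩⟩
  rcases Finset.mem_union.1 (hC.atoms_right hp) with hp | hp
  exacts [.inl (mem_ctxAtoms.1 hp), .inr (mem_goalAtoms.1 hp)]
end
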